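/- For every integer m ≥ 3, the Sperner systems ℳ^m_1 and ℳ^m_2 over E_m are not isomorphic, i.e., there is no bijection σ : E_m → E_m with {σ[S] : S ∈ ℳ^m_1} = ℳ^m_2. -/

import Mathlib

section SetSystems

variable {α β : Type*}

/-- A family of finite sets is a Sperner system (an antichain under inclusion). -/
def IsSperner [DecidableEq α] (F : Finset (Finset α)) : Prop :=
  ∀ S ∈ F, ∀ T ∈ F, S ⊆ T → S = T

/-- Isomorphism of set systems with the given ground sets: a bijection `σ` of the
ground set `A` onto the ground set `B` mapping the family `F` onto the family `G`. -/
def SystemIso [DecidableEq α] [DecidableEq β] (A : Finset α) (F : Finset (Finset α))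
    (B : Finset β) (G : Finset (Finset β)) : Prop :=
  ∃ σ : α → β, Set.BijOn σ ↑A ↑B ∧ F.image (fun S => S.image σ) = G

/-- Identification of `v` with `u` inside a block: `S_I = (S ∖ {v}) ∪ {u}` if `v ∈ S`,
and `S_I = S` otherwise. -/
def identifyBlock [DecidableEq α] (u v : α) (S : Finset α) : Finset α :=
  if v ∈ S then insert u (S.erase v) else S

/-- The identified system `𝒜_I` for `I = {u, v}` (with `u` the kept representative). -/
def identifySystem [DecidableEq α] (u v : α) (F : Finset (Finset α)) : Finset (Finset α) :=
  F.image (identifyBlock u v)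

/-- The minimal members of a family with respect to inclusion. -/
def minimals [DecidableEq α] (F : Finset (Finset α)) : Finset (Finset α) :=
  F.filter (fun S => ∀ T ∈ F, T ⊆ S → T = S)

/-- `𝒜*_I`: the Sperner system of minimal members of the identified system. -/
def starMinor [DecidableEq α] (u v : α) (F : Finset (Finset α)) : Finset (Finset α) :=
  minimals (identifySystem u v F)

/-- Strong hypomorphism: for every two-element subset `I = {u, v}` of the ground set `A`,
the systems `F*_I` and `G*_I` (both over `A ∖ {v}`) are isomorphic. -/
def StronglyHypomorphic [DecidableEq α] (A : Finset α) (F G : Finset (Finset α)) : Prop :=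
  ∀ u ∈ A, ∀ v ∈ A, u ≠ v →
    SystemIso (A.erase v) (starMinor u v F) (A.erase v) (starMinor u v G)

/-- Hypomorphism: a bijection `φ` of the two-element subsets of the ground set `A`
such that `F*_I` is isomorphic to `G*_{φ I}` for every two-element subset `I`. -/
def Hypomorphic [DecidableEq α] (A : Finset α) (F G : Finset (Finset α)) : Prop :=
  ∃ φ : {P : Finset α // P ∈ A.powersetCard 2} ≃ {P : Finset α // P ∈ A.powersetCard 2},
    ∀ (P : {P : Finset α // P ∈ A.powersetCard 2}) (u v u' v' : α),
      u ≠ v → (P : Finset α) = {u, v} → u' ≠ v' → ((φ P : Finset α)) = {u', v'} →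
      SystemIso (A.erase v) (starMinor u v F) (A.erase v') (starMinor u' v' G)

end SetSystems

/-- The ground set `E_m`: two disjoint copies of `{1, …, m}` (modelled as `ZMod m`);
`Sum.inl i` is the unprimed element `i` and `Sum.inr i` is the primed element `i'`. -/
abbrev Em (m : ℕ) := ZMod m ⊕ ZMod m

/-- `A^m_J = J ∪ ({1,…,m} ∖ J)'`. -/
def AJ (m : ℕ) [NeZero m] (J : Finset (ZMod m)) : Finset (Em m) :=
  J.image Sum.inl ∪ Jᶜ.image Sum.inr

/-- `G^m_1 = {A^m_J : J ⊆ {1,…,m}, |J| odd}`. -/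
def G1 (m : ℕ) [NeZero m] : Finset (Finset (Em m)) :=
  ((Finset.univ : Finset (ZMod m)).powerset.filter fun J => Odd J.card).image (AJ m)

/-- `G^m_2 = {A^m_J : J ⊆ {1,…,m}, |J| even}`. -/
def G2 (m : ℕ) [NeZero m] : Finset (Finset (Em m)) :=
  ((Finset.univ : Finset (ZMod m)).powerset.filter fun J => Even J.card).image (AJ m)

/-- `F^m_p = E_m ∖ {p, p', (p+1)'}`. -/
def Fblock (m : ℕ) [NeZero m] (p : ZMod m) : Finset (Em m) :=
  Finset.univ \ {Sum.inl p, Sum.inr p, Sum.inr (p + 1)}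

/-- `F^m = {F^m_p : p ∈ {1,…,m}}`. -/
def Fsys (m : ℕ) [NeZero m] : Finset (Finset (Em m)) :=
  Finset.univ.image (Fblock m)

/-- `ℳ^m_1 = G^m_1 ∪ F^m`. -/
def M1 (m : ℕ) [NeZero m] : Finset (Finset (Em m)) := G1 m ∪ Fsys m

/-- `ℳ^m_2 = G^m_2 ∪ F^m`. -/
def M2 (m : ℕ) [NeZero m] : Finset (Finset (Em m)) := G2 m ∪ Fsys m

section AuxProof

open Finset

variable {α : Type*} [DecidableEq α]

/-- In a nonempty finite set, the numbers of even-card and odd-card subsets agree. -/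
lemma aux_parity_eq (s : Finset α) (hs : s.Nonempty) :
    (s.powerset.filter fun t => Even t.card).card
      = (s.powerset.filter fun t => ¬ Even t.card).card := by
  obtain ⟨a, ha⟩ := hs
  refine Finset.card_bij' (fun t _ => if a ∈ t then t.erase a else insert a t)
      (fun t _ => if a ∈ t then t.erase a else insert a t) ?_ ?_ ?_ ?_
  · intro t ht
    simp only [mem_filter, mem_powerset] at ht ⊢
    obtain ⟨hsub, hev⟩ := ht
    by_cases h : a ∈ t
    · simp only [if_pos h]
      refine ⟨(erase_subset a t).trans hsub, ?_⟩
      have hc : t.card = (t.erase a).card + 1 := by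
        rw [card_erase_of_mem h]; have := Finset.card_pos.2 ⟨a, h⟩; omega
      rw [hc, Nat.even_add_one] at hev
      exact hev
    · simp only [if_neg h]
      refine ⟨insert_subset ha hsub, ?_⟩
      rw [card_insert_of_notMem h, Nat.even_add_one]
      exact fun h' => h' hev
  · intro t ht
    simp only [mem_filter, mem_powerset] at ht ⊢
    obtain ⟨hsub, hev⟩ := ht
    by_cases h : a ∈ t
    · simp only [if_pos h]
      refine ⟨(erase_subset a t).trans hsub, ?_⟩
      have hc : t.card = (t.erase a).card + 1 := by
        rw [card_erase_of_mem h]; have := Finset.card_pos.2 ⟨a, h⟩; omega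
      rw [hc, Nat.even_add_one, not_not] at hev
      exact hev
    · simp only [if_neg h]
      refine ⟨insert_subset ha hsub, ?_⟩
      rw [card_insert_of_notMem h, Nat.even_add_one]
      exact hev
  · intro t _
    by_cases h : a ∈ t
    · simp [h, insert_erase h]
    · simp [h, erase_insert h]
  · intro t _
    by_cases h : a ∈ t
    · simp [h, insert_erase h]
    · simp [h, erase_insert h]

lemma aux_parity_count (s : Finset α) (hs : s.Nonempty) :
    (s.powerset.filter fun t => Even t.card).card = 2 ^ (s.card - 1) ∧
    (s.powerset.filter fun t => ¬ Even t.card).card = 2 ^ (s.card - 1) := by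
  have h1 := aux_parity_eq s hs
  have h2 := Finset.card_filter_add_card_filter_not
    (s := s.powerset) (p := fun t => Even t.card)
  rw [card_powerset] at h2
  have hc : 1 ≤ s.card := card_pos.2 hs
  have hp : 2 ^ s.card = 2 * 2 ^ (s.card - 1) := by
    rw [← pow_succ']; congr 1; omega
  omega

variable [Fintype α]

lemma aux_count_mem (i : α) (p : ℕ → Prop) [DecidablePred p] :
    ((univ : Finset α).powerset.filter fun J => p J.card ∧ i ∈ J).card
      = ((univ.erase i).powerset.filter fun t => p (t.card + 1)).card := by
  refine Finset.card_bij' (fun J _ => J.erase i) (fun t _ => insert i t) ?_ ?_ ?_ ?_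
  · intro J hJ
    simp only [mem_filter, mem_powerset] at hJ ⊢
    obtain ⟨-, hp, hi⟩ := hJ
    refine ⟨erase_subset_erase i (subset_univ J), ?_⟩
    have hc : J.card = (J.erase i).card + 1 := by
      rw [card_erase_of_mem hi]; have := Finset.card_pos.2 ⟨i, hi⟩; omega
    rwa [hc] at hp
  · intro t ht
    simp only [mem_filter, mem_powerset, subset_erase] at ht ⊢
    obtain ⟨⟨-, hit⟩, hp⟩ := ht
    rw [card_insert_of_notMem hit]
    exact ⟨subset_univ _, hp, mem_insert_self i t⟩
  · intro J hJ
    simp only [mem_filter] at hJ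
    exact insert_erase hJ.2.2
  · intro t ht
    simp only [mem_filter, mem_powerset, subset_erase] at ht
    exact erase_insert ht.1.2
  -- no more goals

lemma aux_count_not_mem (i : α) (p : ℕ → Prop) [DecidablePred p] :
    ((univ : Finset α).powerset.filter fun J => p J.card ∧ i ∉ J).card
      = ((univ.erase i).powerset.filter fun t => p t.card).card := by
  congr 1
  ext J
  simp only [mem_filter, mem_powerset, subset_erase, subset_univ, true_and]
  tauto

lemma aux_flip_iff (P : ℕ → Prop) (hP : ∀ n, P (n + 1) ↔ ¬ P n) (n : ℕ) :
    P n ↔ (P 0 ↔ Even n) := by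
  induction n with
  | zero => simp
  | succ k ih => rw [hP, ih, Nat.even_add_one]; tauto

lemma aux_count_P (s : Finset α) (hs : s.Nonempty) (P : ℕ → Prop) [DecidablePred P]
    (hP : ∀ n, P (n + 1) ↔ ¬ P n) :
    (s.powerset.filter fun t => P t.card).card = 2 ^ (s.card - 1) := by
  obtain ⟨he, ho⟩ := aux_parity_count s hs
  by_cases h0 : P 0
  · rw [← he]
    congr 1
    apply filter_congr
    intro t _
    rw [aux_flip_iff P hP]
    simp [h0]
  · rw [← ho]
    congr 1
    apply filter_congr
    intro t _
    rw [aux_flip_iff P hP]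
    simp [h0]

end AuxProof

section MainAux

open Finset

variable {m : ℕ} [NeZero m]

lemma mem_AJ_inl {J : Finset (ZMod m)} {i : ZMod m} : Sum.inl i ∈ AJ m J ↔ i ∈ J := by
  simp [AJ]

lemma mem_AJ_inr {J : Finset (ZMod m)} {i : ZMod m} : Sum.inr i ∈ AJ m J ↔ i ∉ J := by
  simp [AJ]

lemma AJ_injective : Function.Injective (AJ m) := by
  intro J K h
  ext i
  rw [← mem_AJ_inl (J := J), h, mem_AJ_inl]

lemma mem_Fblock_inl {p i : ZMod m} : Sum.inl i ∈ Fblock m p ↔ i ≠ p := by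
  simp [Fblock]

lemma mem_Fblock_inr {p i : ZMod m} : Sum.inr i ∈ Fblock m p ↔ i ≠ p ∧ i ≠ p + 1 := by
  simp [Fblock]

lemma Fblock_injective : Function.Injective (Fblock m) := by
  intro p q h
  by_contra hne
  have h1 : Sum.inl p ∈ Fblock m q := mem_Fblock_inl.2 hne
  rw [← h, mem_Fblock_inl] at h1
  exact h1 rfl

lemma AJ_ne_Fblock (J : Finset (ZMod m)) (p : ZMod m) : AJ m J ≠ Fblock m p := by
  intro h
  by_cases hp : p ∈ J
  · have h1 : Sum.inl p ∈ AJ m J := mem_AJ_inl.2 hp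
    rw [h, mem_Fblock_inl] at h1
    exact h1 rfl
  · have h1 : Sum.inr p ∈ AJ m J := mem_AJ_inr.2 hp
    rw [h, mem_Fblock_inr] at h1
    exact h1.1 rfl

lemma disjoint_G_Fsys (P : ℕ → Prop) [DecidablePred P] :
    Disjoint (((Finset.univ : Finset (ZMod m)).powerset.filter fun J => P J.card).image (AJ m))
      (Fsys m) := by
  rw [Finset.disjoint_left]
  intro S hS hS'
  simp only [Fsys, mem_image] at hS hS'
  obtain ⟨J, -, rfl⟩ := hS
  obtain ⟨p, -, hp⟩ := hS'
  exact AJ_ne_Fblock J p hp.symm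

/-- Degree of an element in a `G`-type system. -/
lemma deg_G (hm : 3 ≤ m) (P : ℕ → Prop) [DecidablePred P]
    (hP : ∀ n, P (n + 1) ↔ ¬ P n) (x : Em m) :
    ((((Finset.univ : Finset (ZMod m)).powerset.filter fun J => P J.card).image
        (AJ m)).filter fun S => x ∈ S).card = 2 ^ (m - 2) := by
  classical
  rw [Finset.filter_image, Finset.card_image_of_injective _ AJ_injective,
    Finset.filter_filter]
  have hcard : (Finset.univ : Finset (ZMod m)).card = m := by
    simp [ZMod.card]
  obtain i | i := x
  · have herase : ((Finset.univ : Finset (ZMod m)).erase i).card = m - 1 := by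
      rw [Finset.card_erase_of_mem (Finset.mem_univ i), hcard]
    have hne : ((Finset.univ : Finset (ZMod m)).erase i).Nonempty := by
      rw [← Finset.card_pos, herase]; omega
    calc ((Finset.univ : Finset (ZMod m)).powerset.filter
          fun J => P J.card ∧ Sum.inl i ∈ AJ m J).card
        = ((Finset.univ : Finset (ZMod m)).powerset.filter
            fun J => P J.card ∧ i ∈ J).card := by
          congr 1; apply Finset.filter_congr; intro J _; rw [mem_AJ_inl]
      _ = (((Finset.univ : Finset (ZMod m)).erase i).powerset.filter
            fun t => P (t.card + 1)).card := aux_count_mem i P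
      _ = 2 ^ (m - 2) := by
          have := aux_count_P ((Finset.univ : Finset (ZMod m)).erase i) hne
            (fun n => P (n + 1)) (fun n => hP (n + 1))
          rw [this, herase]
          congr 1
  · have herase : ((Finset.univ : Finset (ZMod m)).erase i).card = m - 1 := by
      rw [Finset.card_erase_of_mem (Finset.mem_univ i), hcard]
    have hne : ((Finset.univ : Finset (ZMod m)).erase i).Nonempty := by
      rw [← Finset.card_pos, herase]; omega
    calc ((Finset.univ : Finset (ZMod m)).powerset.filter
          fun J => P J.card ∧ Sum.inr i ∈ AJ m J).card
        = ((Finset.univ : Finset (ZMod m)).powerset.filter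
            fun J => P J.card ∧ i ∉ J).card := by
          congr 1; apply Finset.filter_congr; intro J _; rw [mem_AJ_inr]
      _ = (((Finset.univ : Finset (ZMod m)).erase i).powerset.filter
            fun t => P t.card).card := aux_count_not_mem i P
      _ = 2 ^ (m - 2) := by
          rw [aux_count_P _ hne P hP, herase]
          congr 1

/-- Degree of an unprimed element in `Fsys`. -/
lemma deg_F_inl (i : ZMod m) :
    ((Fsys m).filter fun S => Sum.inl i ∈ S).card = m - 1 := by
  rw [Fsys, Finset.filter_image, Finset.card_image_of_injective _ Fblock_injective]
  have : (Finset.univ.filter fun p : ZMod m => Sum.inl i ∈ Fblock m p)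
      = Finset.univ.erase i := by
    ext p
    simp only [Finset.mem_filter, Finset.mem_univ, true_and, Finset.mem_erase,
      mem_Fblock_inl, and_true]
    exact ⟨fun h => fun hpi => h (hpi ▸ rfl), fun h => fun hip => h (hip ▸ rfl)⟩
  rw [this, Finset.card_erase_of_mem (Finset.mem_univ i)]
  simp [ZMod.card]

/-- Degree of a primed element in `Fsys`. -/
lemma deg_F_inr (hm : 3 ≤ m) (i : ZMod m) :
    ((Fsys m).filter fun S => Sum.inr i ∈ S).card = m - 2 := by
  haveI : Fact (1 < m) := ⟨by omega⟩
  rw [Fsys, Finset.filter_image, Finset.card_image_of_injective _ Fblock_injective]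
  have h1 : (Finset.univ.filter fun p : ZMod m => Sum.inr i ∈ Fblock m p)
      = Finset.univ \ {i, i - 1} := by
    ext p
    simp only [Finset.mem_filter, Finset.mem_univ, true_and, Finset.mem_sdiff,
      Finset.mem_insert, Finset.mem_singleton, mem_Fblock_inr]
    constructor
    · rintro ⟨h1, h2⟩ (rfl | rfl)
      · exact h1 rfl
      · exact h2 (by ring)
    · intro h
      push_neg at h
      exact ⟨fun hip => h.1 hip.symm, fun hip => h.2 (by rw [hip]; ring)⟩
  have hne : i ≠ i - 1 := by
    intro h
    have : (1 : ZMod m) = 0 := by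
      have := sub_eq_zero.2 h
      rw [sub_sub_cancel] at this
      exact this
    exact one_ne_zero this
  rw [h1, Finset.card_sdiff_of_subset (Finset.subset_univ _), Finset.card_insert_of_notMem
    (by simpa using hne), Finset.card_singleton]
  simp [ZMod.card]

/-- Degree of an element in a full system `G ∪ F`. -/
lemma deg_M (hm : 3 ≤ m) (P : ℕ → Prop) [DecidablePred P]
    (hP : ∀ n, P (n + 1) ↔ ¬ P n) (x : Em m) :
    (((((Finset.univ : Finset (ZMod m)).powerset.filter fun J => P J.card).image (AJ m))
        ∪ Fsys m).filter fun S => x ∈ S).card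
      = 2 ^ (m - 2) + ((Fsys m).filter fun S => x ∈ S).card := by
  rw [Finset.filter_union, Finset.card_union_of_disjoint
    (Finset.disjoint_filter_filter (disjoint_G_Fsys P)), deg_G hm P hP x]

lemma cnt_AJ (J : Finset (ZMod m)) :
    ((AJ m J).filter fun x => x.isLeft = true).card = J.card := by
  have h : (AJ m J).filter (fun x => x.isLeft = true) = J.image Sum.inl := by
    ext x
    rcases x with i | i <;> simp [AJ]
  rw [h, Finset.card_image_of_injective _ Sum.inl_injective]

lemma cnt_Fblock (p : ZMod m) :
    ((Fblock m p).filter fun x => x.isLeft = true).card = m - 1 := by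
  have h : (Fblock m p).filter (fun x => x.isLeft = true)
      = (Finset.univ.erase p).image Sum.inl := by
    ext x
    rcases x with i | i
    · simp only [Finset.mem_filter, mem_Fblock_inl, Sum.isLeft_inl, and_true,
        Finset.mem_image, Finset.mem_erase, Finset.mem_univ, and_true]
      constructor
      · intro hip
        exact ⟨i, hip, rfl⟩
      · rintro ⟨j, hj, hji⟩
        cases Sum.inl_injective hji
        exact hj
    · simp
  rw [h, Finset.card_image_of_injective _ Sum.inl_injective,
    Finset.card_erase_of_mem (Finset.mem_univ p)]
  simp [ZMod.card]

end MainAux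

/-- For every integer `m ≥ 3`, the Sperner systems `ℳ^m_1` and `ℳ^m_2` over `E_m` are
not isomorphic: there is no bijection `σ : E_m → E_m` with `{σ[S] : S ∈ ℳ^m_1} = ℳ^m_2`. -/
theorem statement0 (m : ℕ) (hm : 3 ≤ m) :
    letI : NeZero m := ⟨by omega⟩
    ¬ ∃ σ : Em m → Em m, Function.Bijective σ ∧
        (M1 m).image (fun S => S.image σ) = M2 m := by
  haveI : NeZero m := ⟨by omega⟩
  rintro ⟨σ, hbij, himg⟩
  have hinj : Function.Injective σ := hbij.1
  have himgS : Function.Injective (fun S : Finset (Em m) => S.image σ) :=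
    Finset.image_injective hinj
  -- degrees are preserved by σ
  have hdeg : ∀ x : Em m, ((M2 m).filter fun S => σ x ∈ S).card
      = ((M1 m).filter fun S => x ∈ S).card := by
    intro x
    rw [← himg, Finset.filter_image, Finset.card_image_of_injective _ himgS]
    congr 1
    apply Finset.filter_congr
    intro S _
    constructor
    · intro hx
      obtain ⟨y, hy, hxy⟩ := Finset.mem_image.1 hx
      rwa [← hinj hxy]
    · intro hx
      exact Finset.mem_image_of_mem σ hx
  -- degree formulas
  have hOdd : ∀ n : ℕ, Odd (n + 1) ↔ ¬ Odd n := fun n => Nat.odd_add_one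
  have hEven : ∀ n : ℕ, Even (n + 1) ↔ ¬ Even n := fun n => Nat.even_add_one
  have dM1 : ∀ x : Em m, ((M1 m).filter fun S => x ∈ S).card
      = 2 ^ (m - 2) + ((Fsys m).filter fun S => x ∈ S).card := by
    intro x
    rw [M1, G1]
    exact deg_M hm (fun n => Odd n) hOdd x
  have dM2 : ∀ x : Em m, ((M2 m).filter fun S => x ∈ S).card
      = 2 ^ (m - 2) + ((Fsys m).filter fun S => x ∈ S).card := by
    intro x
    rw [M2, G2]
    exact deg_M hm (fun n => Even n) hEven x
  have dF : ∀ x : Em m, ((Fsys m).filter fun S => x ∈ S).card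
      = if x.isLeft then m - 1 else m - 2 := by
    rintro (i | i)
    · simpa using deg_F_inl i
    · simpa using deg_F_inr hm i
  -- σ preserves the two sides
  have hside : ∀ x : Em m, (σ x).isLeft = x.isLeft := by
    intro x
    have h := hdeg x
    rw [dM1, dM2, dF, dF] at h
    have h2 : (if (σ x).isLeft then m - 1 else m - 2)
        = (if x.isLeft then m - 1 else m - 2) := Nat.add_left_cancel h
    rcases hσx : (σ x).isLeft <;> rcases hx : x.isLeft <;>
      rw [hσx, hx] at h2 <;> simp_all <;> omega
  -- consider the image of A_{{0}} ∈ M1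
  set T := (AJ m ({0} : Finset (ZMod m))).image σ with hT
  have hA0 : AJ m ({0} : Finset (ZMod m)) ∈ M1 m := by
    rw [M1, G1]
    apply Finset.mem_union_left
    apply Finset.mem_image_of_mem
    simp
  have hTmem : T ∈ M2 m := by
    rw [← himg]
    exact Finset.mem_image_of_mem _ hA0
  have hcntT : (T.filter fun x => x.isLeft = true).card = 1 := by
    rw [hT, Finset.filter_image]
    have hc : ((AJ m ({0} : Finset (ZMod m))).filter fun x => (σ x).isLeft = true)
        = (AJ m ({0} : Finset (ZMod m))).filter fun x => x.isLeft = true := by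
      apply Finset.filter_congr
      intro x _
      rw [hside x]
    rw [hc, Finset.card_image_of_injective _ hinj, cnt_AJ]
    simp
  rw [M2] at hTmem
  rcases Finset.mem_union.1 hTmem with hG | hF
  · rw [G2] at hG
    obtain ⟨K, hK, hKT⟩ := Finset.mem_image.1 hG
    rw [Finset.mem_filter] at hK
    rw [← hKT, cnt_AJ] at hcntT
    rw [hcntT] at hK
    simpa using hK.2
  · obtain ⟨p, -, hpT⟩ := Finset.mem_image.1 hF
    rw [← hpT, cnt_Fblock] at hcntT
    omega
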